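/- arXiv:2211.14008 — 3 statements merged into one kernel-verified Lean document; each statement's English description precedes it below -/
import Mathlib

section
/- Let X = ℝ^n (or ℂ^n) with the ℓ_∞ norm, and Y = ker f where f(x) = x_1 + … + x_n. Then λ(Y, X) = 2 − 2/n, and the projection P_0(x) = x − f(x)·u with u = (1/n, …, 1/n) is a minimal projection onto Y. -/
open Metric Module

noncomputable section

variable {𝕜 : Type*} [RCLike 𝕜] {X : Type*} [NormedAddCommGroup X] [NormedSpace 𝕜 X]

def IsProjOnto (Y : Submodule 𝕜 X) (P : X →L[𝕜] X) : Prop :=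
  (∀ x, P x ∈ Y) ∧ ∀ y ∈ Y, P y = y

def relProjConst (Y : Submodule 𝕜 X) : ℝ :=
  sInf {c | ∃ P : X →L[𝕜] X, IsProjOnto Y P ∧ ‖P‖ = c}

def MinProjSet (Y : Submodule 𝕜 X) : Set (X →L[𝕜] X) :=
  {P | IsProjOnto Y P ∧ ‖P‖ = relProjConst Y}

/-!
In the sup norm the operator norm of a map is the largest ℓ¹ norm of a row of its matrix.
A projection onto `ker (∑ xᵢ)` has the form `P x = x - (∑ xⱼ) w` with `∑ wᵢ = 1`, so its
`i`-th row has norm `‖1 - wᵢ‖ + (n - 1) ‖wᵢ‖`. Averaging over `i` and using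
`∑ ‖1 - wᵢ‖ ≥ ‖∑ (1 - wᵢ)‖ = n - 1` and `∑ ‖wᵢ‖ ≥ 1` gives `‖P‖ ≥ 2 - 2/n`, with equality
for `w = (1/n, …, 1/n)`.
-/

namespace PiLp

variable {ι κ : Type*} [Fintype ι] [Fintype κ] [DecidableEq ι]

attribute [local instance] Matrix.linftyOpNormedAddCommGroup in
theorem opNNNorm_eq_sup_sum_nnnorm_apply_single
    (T : PiLp ⊤ (fun _ : ι => 𝕜) →L[𝕜] PiLp ⊤ (fun _ : κ => 𝕜)) :
    ‖T‖₊ = Finset.univ.sup fun i => ∑ j, ‖T (single ⊤ j 1) i‖₊ := by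
  let eι := equivₗᵢ (𝕜 := 𝕜) fun _ : ι => 𝕜
  let eκ := equivₗᵢ (𝕜 := 𝕜) fun _ : κ => 𝕜
  have hconj : ‖eκ.toContinuousLinearEquiv.toContinuousLinearMap ∘L
      T ∘L eι.symm.toContinuousLinearEquiv.toContinuousLinearMap‖₊ = ‖T‖₊ := by
    simpa using T.opNNNorm_comp_linearIsometryEquiv eι.symm
  rw [← hconj, ← Matrix.linfty_opNNNorm_toMatrix, Matrix.linfty_opNNNorm_def]
  rfl

theorem sum_norm_apply_single_le_opNorm
    (T : PiLp ⊤ (fun _ : ι => 𝕜) →L[𝕜] PiLp ⊤ (fun _ : κ => 𝕜)) (i : κ) :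
    ∑ j, ‖T (single ⊤ j 1) i‖ ≤ ‖T‖ := by
  have h := Finset.le_sup (f := fun i => ∑ j, ‖T (single ⊤ j 1) i‖₊) (Finset.mem_univ i)
  rw [← opNNNorm_eq_sup_sum_nnnorm_apply_single] at h
  simpa using NNReal.coe_le_coe.2 h

theorem opNorm_le_of_forall_sum_norm_apply_single_le
    (T : PiLp ⊤ (fun _ : ι => 𝕜) →L[𝕜] PiLp ⊤ (fun _ : κ => 𝕜)) {C : ℝ} (hC : 0 ≤ C)
    (h : ∀ i, ∑ j, ‖T (single ⊤ j 1) i‖ ≤ C) : ‖T‖ ≤ C := by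
  lift C to NNReal using hC
  rw [← coe_nnnorm, NNReal.coe_le_coe, opNNNorm_eq_sup_sum_nnnorm_apply_single]
  exact Finset.sup_le fun i _ => by simpa [← NNReal.coe_le_coe] using h i

end PiLp

theorem IsProjOnto.apply_eq_sub_smul {Y : Submodule 𝕜 X} {P : X →L[𝕜] X}
    (hP : IsProjOnto Y P) {f : X →ₗ[𝕜] 𝕜} (hY : ∀ x, x ∈ Y ↔ f x = 0) {v : X} (hv : f v = 1)
    (x : X) : P x = x - f x • (v - P v) := by
  have hfix : P (x - f x • v) = x - f x • v :=
    hP.2 _ ((hY _).2 (by simp [hv]))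
  rw [map_sub, map_smul] at hfix
  linear_combination (norm := module) hfix

section Hyperplane

variable {ι : Type*} [Fintype ι] {Y : Submodule 𝕜 (PiLp ⊤ fun _ : ι => 𝕜)}

theorem IsProjOnto.exists_apply_eq_sub_sum_mul [Nonempty ι]
    (hY : ∀ x : PiLp ⊤ (fun _ : ι => 𝕜), x ∈ Y ↔ ∑ i, x i = 0)
    {P : (PiLp ⊤ fun _ : ι => 𝕜) →L[𝕜] PiLp ⊤ fun _ : ι => 𝕜} (hP : IsProjOnto Y P) :
    ∃ w : ι → 𝕜, ∑ i, w i = 1 ∧ ∀ x i, P x i = x i - (∑ j, x j) * w i := by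
  classical
  let f : (PiLp ⊤ fun _ : ι => 𝕜) →ₗ[𝕜] 𝕜 := ∑ i, PiLp.projₗ ⊤ (fun _ : ι => 𝕜) i
  have hf : ∀ x, f x = ∑ i, x i := fun x => by simp [f]
  let v : PiLp ⊤ fun _ : ι => 𝕜 := PiLp.single ⊤ (Classical.arbitrary ι) 1
  have hv : f v = 1 := by simp [hf, v]
  refine ⟨fun i => (v - P v) i, ?_, fun x i => ?_⟩
  · have hPv : ∑ i, P v i = 0 := (hY _).1 (hP.1 v)
    simpa [Finset.sum_sub_distrib, hPv, hf] using hv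
  · rw [hP.apply_eq_sub_smul (fun x => (hY x).trans (by rw [hf])) hv x, hf]
    rfl

theorem isProjOnto_of_apply_eq_sub_sum_mul
    (hY : ∀ x : PiLp ⊤ (fun _ : ι => 𝕜), x ∈ Y ↔ ∑ i, x i = 0)
    {T : (PiLp ⊤ fun _ : ι => 𝕜) →L[𝕜] PiLp ⊤ fun _ : ι => 𝕜} {w : ι → 𝕜}
    (hw : ∑ i, w i = 1) (hT : ∀ x i, T x i = x i - (∑ j, x j) * w i) : IsProjOnto Y T := by
  refine ⟨fun x => ?_, fun y hy => ?_⟩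
  · simp [hY, hT, Finset.sum_sub_distrib, ← Finset.mul_sum, hw]
  · ext i
    simp [hT, (hY y).1 hy]

theorem sum_norm_apply_single_eq_of_apply_eq_sub_sum_mul [DecidableEq ι]
    {T : (PiLp ⊤ fun _ : ι => 𝕜) →L[𝕜] PiLp ⊤ fun _ : ι => 𝕜} {w : ι → 𝕜}
    (hT : ∀ x i, T x i = x i - (∑ j, x j) * w i) (i : ι) :
    ∑ j, ‖T (PiLp.single ⊤ j 1) i‖ = ‖1 - w i‖ + (Fintype.card ι - 1) * ‖w i‖ := by
  have hentry : ∀ j, T (PiLp.single ⊤ j 1) i = (if i = j then 1 else 0) - w i := by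
    simp [hT, PiLp.single_apply]
  have hoff : ∀ j ∈ ({i}ᶜ : Finset ι), ‖T (PiLp.single ⊤ j 1) i‖ = ‖w i‖ := fun j hj => by
    rw [hentry, if_neg (by simpa [eq_comm] using hj), zero_sub, norm_neg]
  rw [Fintype.sum_eq_add_sum_compl i, Finset.sum_congr rfl hoff, Finset.sum_const,
    Finset.card_compl, Finset.card_singleton, nsmul_eq_mul, hentry, if_pos rfl,
    Nat.cast_sub (Fintype.card_pos_iff.2 ⟨i⟩), Nat.cast_one]

theorem two_mul_card_sub_one_le_sum_norm {w : ι → 𝕜} (hw : ∑ i, w i = 1) :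
    2 * ((Fintype.card ι : ℝ) - 1) ≤
      ∑ i, (‖1 - w i‖ + (Fintype.card ι - 1) * ‖w i‖) := by
  obtain ⟨i, -⟩ := Finset.exists_ne_zero_of_sum_ne_zero (hw ▸ one_ne_zero : ∑ i, w i ≠ 0)
  have hcard : (1 : ℝ) ≤ Fintype.card ι := by
    exact_mod_cast Fintype.card_pos_iff.2 ⟨i⟩
  have hdiff : Fintype.card ι - 1 ≤ ∑ i, ‖1 - w i‖ := by
    have hsum : ∑ i, (1 - w i) = ((Fintype.card ι - 1 : ℝ) : 𝕜) := by
      simp [Finset.sum_sub_distrib, hw]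
    calc (Fintype.card ι : ℝ) - 1 = ‖∑ i, (1 - w i)‖ := by
          rw [hsum, RCLike.norm_ofReal, abs_of_nonneg (by linarith)]
      _ ≤ ∑ i, ‖1 - w i‖ := norm_sum_le _ _
  have hw_norm : 1 ≤ ∑ i, ‖w i‖ := by
    simpa [hw] using norm_sum_le Finset.univ w
  rw [Finset.sum_add_distrib, ← Finset.mul_sum]
  nlinarith

theorem IsProjOnto.two_sub_two_div_card_le_opNorm [Nonempty ι]
    (hY : ∀ x : PiLp ⊤ (fun _ : ι => 𝕜), x ∈ Y ↔ ∑ i, x i = 0)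
    {P : (PiLp ⊤ fun _ : ι => 𝕜) →L[𝕜] PiLp ⊤ fun _ : ι => 𝕜} (hP : IsProjOnto Y P) :
    2 - 2 / (Fintype.card ι : ℝ) ≤ ‖P‖ := by
  classical
  obtain ⟨w, hw, hPw⟩ := hP.exists_apply_eq_sub_sum_mul hY
  have hrows : ∑ i, (‖1 - w i‖ + (Fintype.card ι - 1) * ‖w i‖) ≤ Fintype.card ι * ‖P‖ := by
    simpa using Finset.sum_le_card_nsmul Finset.univ _ ‖P‖ fun i _ =>
      sum_norm_apply_single_eq_of_apply_eq_sub_sum_mul hPw i ▸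
        PiLp.sum_norm_apply_single_le_opNorm P i
  have hcard : (0 : ℝ) < Fintype.card ι := by exact_mod_cast Fintype.card_pos
  rw [show 2 - 2 / (Fintype.card ι : ℝ) = 2 * (Fintype.card ι - 1) / Fintype.card ι by
    field_simp, div_le_iff₀' hcard]
  exact (two_mul_card_sub_one_le_sum_norm hw).trans hrows

theorem opNorm_le_two_sub_two_div_card [Nonempty ι]
    {T : (PiLp ⊤ fun _ : ι => 𝕜) →L[𝕜] PiLp ⊤ fun _ : ι => 𝕜}
    (hT : ∀ x i, T x i = x i - (∑ j, x j) * (Fintype.card ι : 𝕜)⁻¹) :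
    ‖T‖ ≤ 2 - 2 / (Fintype.card ι : ℝ) := by
  classical
  have hcard : (1 : ℝ) ≤ Fintype.card ι := by exact_mod_cast Fintype.card_pos
  refine PiLp.opNorm_le_of_forall_sum_norm_apply_single_le T ?_ fun i => ?_
  · linarith [div_le_self zero_le_two hcard]
  · have hsub : (1 : 𝕜) - (Fintype.card ι : 𝕜)⁻¹ = ((1 - (Fintype.card ι : ℝ)⁻¹ : ℝ) : 𝕜) := by
      simp
    rw [sum_norm_apply_single_eq_of_apply_eq_sub_sum_mul (w := fun _ => _) hT i, hsub,
      RCLike.norm_ofReal, abs_of_nonneg (sub_nonneg.2 (inv_le_one_of_one_le₀ hcard)), norm_inv,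
      RCLike.norm_natCast]
    refine le_of_eq ?_
    field_simp
    ring

end Hyperplane

theorem relProjConst_eq_opNorm_of_forall_le {Y : Submodule 𝕜 X} {P₀ : X →L[𝕜] X}
    (hP₀ : IsProjOnto Y P₀) (hmin : ∀ P, IsProjOnto Y P → ‖P₀‖ ≤ ‖P‖) :
    relProjConst Y = ‖P₀‖ :=
  le_antisymm (csInf_le ⟨‖P₀‖, by rintro _ ⟨P, hP, rfl⟩; exact hmin P hP⟩ ⟨P₀, hP₀, rfl⟩)
    (le_csInf ⟨_, P₀, hP₀, rfl⟩ (by rintro _ ⟨P, hP, rfl⟩; exact hmin P hP))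

/-- For `X = 𝕜ⁿ` with the sup norm (`𝕜 = ℝ` or `ℂ`) and the hyperplane
`Y = ker (x ↦ x₁ + ⋯ + x_n)`, one has `λ(Y, X) = 2 - 2/n`, and the projection
`P₀ x = x - (∑ x_j) • (1/n, …, 1/n)` is a minimal projection onto `Y`. -/
theorem linf_hyperplane_projConst {n : ℕ} (hn : 1 ≤ n)
    (Y : Submodule 𝕜 (PiLp ⊤ fun _ : Fin n => 𝕜))
    (hY : ∀ x : PiLp ⊤ fun _ : Fin n => 𝕜, x ∈ Y ↔ ∑ i, x i = 0)
    (P₀ : (PiLp ⊤ fun _ : Fin n => 𝕜) →L[𝕜] (PiLp ⊤ fun _ : Fin n => 𝕜))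
    (hP₀ : ∀ (x : PiLp ⊤ fun _ : Fin n => 𝕜) (i : Fin n),
      P₀ x i = x i - (∑ j, x j) / (n : 𝕜)) :
    relProjConst Y = 2 - 2 / (n : ℝ) ∧ P₀ ∈ MinProjSet Y := by
  have : Nonempty (Fin n) := ⟨⟨0, hn⟩⟩
  have hP₀' : ∀ x i, P₀ x i = x i - (∑ j, x j) * (Fintype.card (Fin n) : 𝕜)⁻¹ := by
    simpa [div_eq_mul_inv] using hP₀
  have hproj : IsProjOnto Y P₀ := isProjOnto_of_apply_eq_sub_sum_mul hY
    (by simp [Nat.one_le_iff_ne_zero.mp hn]) hP₀'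
  have hlower : ∀ P, IsProjOnto Y P → 2 - 2 / (n : ℝ) ≤ ‖P‖ := fun P hP => by
    simpa using hP.two_sub_two_div_card_le_opNorm hY
  have hnorm : ‖P₀‖ = 2 - 2 / (n : ℝ) :=
    le_antisymm (by simpa using opNorm_le_two_sub_two_div_card hP₀') (hlower P₀ hproj)
  have hconst : relProjConst Y = ‖P₀‖ :=
    relProjConst_eq_opNorm_of_forall_le hproj (hnorm ▸ hlower)
  exact ⟨hconst.trans hnorm, hproj, hconst.symm⟩
end
end

section
/- Let X be an n-dimensional normed space over ℝ or ℂ and Y ⊆ X a subspace with λ(Y,X) > 1. If T = Σ_{i=1}^l α_i x_i ⊗ f_i is a Chalmers–Metcalf operator for Y, then dim span{f_1|_Y, …, f_l|_Y} (in Y*) is strictly smaller than dim span{f_1, …, f_l} (in X*). -/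
/-! If restricting to `Y` lost no dimension on `span {fᵢ}`, then every functional `g` vanishing
on `Y` has `g ∘ T = ∑ αᵢ g(xᵢ) fᵢ` in that span and vanishing on `Y` (as `T(Y) ⊆ Y`), hence
`g ∘ T = 0`; so `T(X) ⊆ Y`. Then `P₀ ∘ T = T`, and comparing traces gives
`λ(Y, X) = ∑ αᵢ fᵢ(P₀ xᵢ) = ∑ αᵢ fᵢ(xᵢ) ≤ 1`. -/

open Metric Module

noncomputable section

variable {𝕜 : Type*} [RCLike 𝕜] {X : Type*} [NormedAddCommGroup X] [NormedSpace 𝕜 X]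
  [NormedSpace ℝ X] [IsScalarTower ℝ 𝕜 X]

/-- `∑ i, α i • (x i ⊗ f i)` is a Chalmers–Metcalf operator for `Y`. -/
def IsCM (Y : Submodule 𝕜 X) {l : ℕ} (α : Fin l → ℝ) (x : Fin l → X)
    (f : Fin l → (X →L[𝕜] 𝕜)) : Prop :=
  (∀ i, 0 < α i) ∧ ∑ i, α i = 1 ∧
  (∀ i, x i ∈ Set.extremePoints ℝ (closedBall (0 : X) 1)) ∧
  (∀ i, f i ∈ Set.extremePoints ℝ (closedBall (0 : X →L[𝕜] 𝕜) 1)) ∧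
  (∀ y ∈ Y, (∑ i, α i • (f i y • x i)) ∈ Y) ∧
  ∃ P₀ ∈ MinProjSet Y, ∀ i, f i (P₀ (x i)) = (relProjConst Y : 𝕜)

namespace LinearMap

section SumRankOne

variable {R M ι : Type*} [CommRing R] [AddCommGroup M] [Module R M] [Fintype ι]

def sumRankOne (c : ι → R) (f : ι → Dual R M) (x : ι → M) : M →ₗ[R] M :=
  ∑ i, c i • (f i).smulRight (x i)

variable (c : ι → R) (f : ι → Dual R M) (x : ι → M)

theorem sumRankOne_apply (v : M) : sumRankOne c f x v = ∑ i, c i • (f i v • x i) := by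
  simp [sumRankOne]

theorem comp_sumRankOne (A : M →ₗ[R] M) : A ∘ₗ sumRankOne c f x = sumRankOne c f (A ∘ x) := by
  ext v
  simp [sumRankOne_apply]

theorem trace_sumRankOne [Free R M] [Module.Finite R M] :
    trace R M (sumRankOne c f x) = ∑ i, c i * f i (x i) := by
  simp [sumRankOne]

theorem range_dualMap_sumRankOne_le :
    range (sumRankOne c f x).dualMap ≤ Submodule.span R (Set.range f) := by
  rintro _ ⟨g, rfl⟩
  have : (sumRankOne c f x).dualMap g = ∑ i, (c i * g (x i)) • f i := by
    ext v
    simp [sumRankOne_apply, mul_comm, mul_left_comm]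
  rw [this]
  exact Submodule.sum_mem _ fun i _ => Submodule.smul_mem _ _ (Submodule.subset_span ⟨i, rfl⟩)

theorem sum_apply_comp_eq_of_range_le [Free R M] [Module.Finite R M] {Y : Submodule R M}
    (hT : range (sumRankOne c f x) ≤ Y) {P : M →ₗ[R] M} (hP : ∀ y ∈ Y, P y = y) :
    ∑ i, c i * f i (P (x i)) = ∑ i, c i * f i (x i) := by
  have hPT : P ∘ₗ sumRankOne c f x = sumRankOne c f x :=
    ext fun v => hP _ (hT ⟨v, rfl⟩)
  calc ∑ i, c i * f i (P (x i)) = trace R M (sumRankOne c f (P ∘ x)) :=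
        (trace_sumRankOne c f _).symm
    _ = trace R M (sumRankOne c f x) := by rw [← comp_sumRankOne, hPT]
    _ = ∑ i, c i * f i (x i) := trace_sumRankOne c f x

end SumRankOne

variable {K V : Type*} [Field K] [AddCommGroup V] [Module K V]

theorem range_le_of_disjoint_dualAnnihilator {Y : Submodule K V} {T : V →ₗ[K] V}
    (hTY : ∀ y ∈ Y, T y ∈ Y) {D : Submodule K (Dual K V)} (hTD : range T.dualMap ≤ D)
    (hD : Disjoint D Y.dualAnnihilator) : range T ≤ Y := by
  rintro _ ⟨v, rfl⟩
  rw [← Subspace.forall_mem_dualAnnihilator_apply_eq_zero_iff]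
  intro g hg
  have hgT : T.dualMap g ∈ Y.dualAnnihilator :=
    (Submodule.mem_dualAnnihilator _).2 fun y hy =>
      (Submodule.mem_dualAnnihilator _).1 hg _ (hTY y hy)
  have : T.dualMap g = 0 := hD.le_bot ⟨hTD ⟨g, rfl⟩, hgT⟩
  exact congr($this v)

theorem finrank_span_dualRestrict_lt {ι : Type*} [Fintype ι] {Y : Submodule K V}
    (c : ι → K) (f : ι → Dual K V) (x : ι → V) (hTY : ∀ y ∈ Y, sumRankOne c f x y ∈ Y)
    (hT : ¬ range (sumRankOne c f x) ≤ Y) :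
    finrank K (Submodule.span K (Set.range fun i => Y.dualRestrict (f i))) <
      finrank K (Submodule.span K (Set.range f)) := by
  rw [Set.range_comp' .., Submodule.span_image]
  have := FiniteDimensional.span_of_finite K (Set.finite_range f)
  refine (Submodule.finrank_map_le _ _).lt_of_ne fun hrank => hT ?_
  have hD := Submodule.disjoint_ker_of_finrank_le _ hrank.ge
  rw [Submodule.dualRestrict_ker_eq_dualAnnihilator] at hD
  exact range_le_of_disjoint_dualAnnihilator hTY (range_dualMap_sumRankOne_le c f x) hD

end LinearMap

theorem ContinuousLinearMap.finrank_span_range_toLinearMap {E ι : Type*} [NormedAddCommGroup E]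
    [NormedSpace 𝕜 E] (f : ι → E →L[𝕜] 𝕜) :
    finrank 𝕜 (Submodule.span 𝕜 (Set.range fun i => (f i : Dual 𝕜 E))) =
      finrank 𝕜 (Submodule.span 𝕜 (Set.range f)) := by
  rw [show (fun i => (f i : Dual 𝕜 E)) = ContinuousLinearMap.coeLM 𝕜 ∘ f from rfl,
    Set.range_comp, Submodule.span_image]
  exact (Submodule.equivMapOfInjective _ ContinuousLinearMap.coe_injective _).finrank_eq.symm

theorem norm_sum_ofReal_mul_apply_le_one {E ι : Type*} [NormedAddCommGroup E]
    [NormedSpace 𝕜 E] [Fintype ι] {α : ι → ℝ} (hα : ∀ i, 0 ≤ α i) (hαsum : ∑ i, α i = 1)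
    {x : ι → E} (hx : ∀ i, ‖x i‖ ≤ 1) {f : ι → E →L[𝕜] 𝕜} (hf : ∀ i, ‖f i‖ ≤ 1) :
    ‖∑ i, (α i : 𝕜) * f i (x i)‖ ≤ 1 := by
  have hmem := (convex_closedBall (0 : 𝕜) 1).sum_mem (fun i _ => hα i) hαsum
    fun i _ => mem_closedBall_zero_iff.2 <| by
      simpa using (f i).le_of_opNorm_le_of_le (hf i) (hx i)
  simpa [RCLike.real_smul_eq_coe_mul] using hmem

/-- If `λ(Y, X) > 1` and `T = ∑ αᵢ xᵢ ⊗ fᵢ` is a Chalmers–Metcalf operator for `Y`,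
then `dim span {f₁|_Y, …, f_l|_Y} < dim span {f₁, …, f_l}`. -/
theorem cm_restriction_span_lt [FiniteDimensional 𝕜 X] (Y : Submodule 𝕜 X)
    (hlam : 1 < relProjConst Y) {l : ℕ} (α : Fin l → ℝ) (x : Fin l → X)
    (f : Fin l → (X →L[𝕜] 𝕜)) (hCM : IsCM Y α x f) :
    finrank 𝕜 ↥(Submodule.span 𝕜
        (Set.range fun i => (f i).toLinearMap.domRestrict Y)) <
      finrank 𝕜 ↥(Submodule.span 𝕜 (Set.range f)) := by
  obtain ⟨hα, hαsum, hx, hf, hTY, P₀, ⟨hP₀, -⟩, hfP⟩ := hCM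
  set T := LinearMap.sumRankOne (fun i => (α i : 𝕜)) (fun i => (f i : Dual 𝕜 X)) x
  have hT : ∀ v, T v = ∑ i, α i • (f i v • x i) := fun v =>
    (LinearMap.sumRankOne_apply _ _ _ v).trans <| Finset.sum_congr rfl fun i _ =>
      (RCLike.real_smul_eq_coe_smul (K := 𝕜) _ _).symm
  rw [← ContinuousLinearMap.finrank_span_range_toLinearMap]
  refine LinearMap.finrank_span_dualRestrict_lt _ _ x (fun y hy => hT y ▸ hTY y hy)
    fun hrange => ?_
  have htrace := LinearMap.sum_apply_comp_eq_of_range_le _ _ _ hrange (P := P₀) hP₀.2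
  simp only [ContinuousLinearMap.coe_coe, hfP, ← Finset.sum_mul, ← RCLike.ofReal_sum, hαsum,
    RCLike.ofReal_one, one_mul] at htrace
  have hbound := norm_sum_ofReal_mul_apply_le_one (fun i => (hα i).le) hαsum
    (fun i => mem_closedBall_zero_iff.1 (hx i).1) (fun i => mem_closedBall_zero_iff.1 (hf i).1)
  rw [← htrace, RCLike.norm_ofReal] at hbound
  exact hlam.not_ge ((le_abs_self _).trans hbound)
end
end

section
/- Let X be an n-dimensional normed space over ℝ or ℂ with n ≥ 2, and Y = ker f a hyperplane with λ(Y,X) > 1. Suppose T = Σ_{i=1}^l α_i x_i ⊗ f_i is a Chalmers–Metcalf operator for Y such that no nonzero y ∈ Y satisfies f_i(y) = 0 for all 1 ≤ i ≤ l. Then the minimal projection from X onto Y is unique. -/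
open Metric Module

noncomputable section

variable {𝕜 : Type*} [RCLike 𝕜] {X : Type*} [NormedAddCommGroup X] [NormedSpace 𝕜 X]
  [NormedSpace ℝ X] [IsScalarTower ℝ 𝕜 X]

/-! The difference of two projections onto the hyperplane `Y = ker F` is a rank-one map
`z ↦ F z • w` with `w ∈ Y`. For a minimal projection `P`, averaging `fᵢ (P xᵢ)` with the
weights `αᵢ` therefore differs from the same average for `P₀` by `F (T w) = 0`, since `T` maps `Y`
into `Y`; as each `‖fᵢ (P xᵢ)‖ ≤ ‖P‖ = λ`, every `fᵢ (P xᵢ)` equals `λ`. Comparing with `P₀` gives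
`F (xᵢ) fᵢ w = 0`, and `F (xᵢ) ≠ 0` because `xᵢ ∈ Y` would force `λ = fᵢ (P₀ xᵢ) = fᵢ xᵢ ≤ 1`.
Hence all `fᵢ w` vanish, so `w = 0` and `P = P₀`. -/

theorem LinearMap.exists_mem_range_eq_smul_of_ker_le {K M N : Type*} [Field K]
    [AddCommGroup M] [Module K M] [AddCommGroup N] [Module K N]
    (φ : M →ₗ[K] K) (D : M →ₗ[K] N) (h : LinearMap.ker φ ≤ LinearMap.ker D) :
    ∃ w ∈ LinearMap.range D, ∀ z, D z = φ z • w := by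
  by_cases hφ : φ = 0
  · refine ⟨0, Submodule.zero_mem _, fun z => ?_⟩
    have hz : z ∈ LinearMap.ker D := h (by simp [hφ])
    simpa using hz
  obtain ⟨x₀, hx₀⟩ := DFunLike.ne_iff.mp hφ
  refine ⟨(φ x₀)⁻¹ • D x₀, Submodule.smul_mem _ _ (LinearMap.mem_range_self D x₀), fun z => ?_⟩
  have hker : z - (φ z * (φ x₀)⁻¹) • x₀ ∈ LinearMap.ker D :=
    h (by simp [LinearMap.mem_ker, mul_assoc, inv_mul_cancel₀ hx₀])
  rw [LinearMap.mem_ker, map_sub, sub_eq_zero] at hker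
  rw [hker, map_smul, mul_smul]

theorem RCLike.eq_of_sum_smul_eq_of_norm_le {K ι : Type*} [RCLike K] [Fintype ι]
    {α : ι → ℝ} {z : ι → K} {c : ℝ} (hα : ∀ i, 0 < α i) (hα_sum : ∑ i, α i = 1)
    (hz : ∀ i, ‖z i‖ ≤ c) (h : ∑ i, α i • z i = c) (i : ι) : z i = c := by
  have hgap : ∑ j, α j * (c - RCLike.re (z j)) = 0 := by
    have hre : ∑ j, α j * RCLike.re (z j) = c := by
      simpa [RCLike.smul_re] using congrArg RCLike.re h
    simp only [mul_sub, Finset.sum_sub_distrib, ← Finset.sum_mul, hα_sum, hre, one_mul, sub_self]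
  have hnonneg : ∀ j ∈ Finset.univ, 0 ≤ α j * (c - RCLike.re (z j)) := fun j _ =>
    mul_nonneg (hα j).le (sub_nonneg.mpr ((RCLike.re_le_norm _).trans (hz j)))
  have hre_i : RCLike.re (z i) = c := by
    have := (Finset.sum_eq_zero_iff_of_nonneg hnonneg).mp hgap i (Finset.mem_univ i)
    rcases mul_eq_zero.mp this with h0 | h0
    · exact absurd h0 (hα i).ne'
    · linarith
  rw [← hre_i]
  exact (RCLike.re_eq_self_of_le (hre_i ▸ hz i)).symm

section

variable {E : Type*} [NormedAddCommGroup E] [NormedSpace 𝕜 E]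

theorem IsProjOnto.exists_sub_eq_smul {Y : Submodule 𝕜 E} {F : E →L[𝕜] 𝕜}
    (hY : Y = LinearMap.ker (F : E →ₗ[𝕜] 𝕜)) {P Q : E →L[𝕜] E}
    (hP : IsProjOnto Y P) (hQ : IsProjOnto Y Q) : ∃ w ∈ Y, ∀ z, P z - Q z = F z • w := by
  have hker : LinearMap.ker (F : E →ₗ[𝕜] 𝕜) ≤ LinearMap.ker ((P - Q : E →L[𝕜] E) : E →ₗ[𝕜] E) :=
    fun y hy => by simp [hP.2 y (hY ▸ hy), hQ.2 y (hY ▸ hy)]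
  obtain ⟨w, ⟨v, rfl⟩, hw⟩ := LinearMap.exists_mem_range_eq_smul_of_ker_le _ _ hker
  exact ⟨P v - Q v, Y.sub_mem (hP.1 v) (hQ.1 v), hw⟩

namespace IsCM

variable [NormedSpace ℝ E] {Y : Submodule 𝕜 E} {l : ℕ} {α : Fin l → ℝ} {x : Fin l → E}
  {f : Fin l → (E →L[𝕜] 𝕜)}

theorem norm_apply_apply_le (hCM : IsCM Y α x f) (A : E →L[𝕜] E) (i : Fin l) :
    ‖f i (A (x i))‖ ≤ ‖A‖ := by
  have hx : ‖x i‖ ≤ 1 := mem_closedBall_zero_iff.mp (hCM.2.2.1 i).1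
  have hf : ‖f i‖ ≤ 1 := mem_closedBall_zero_iff.mp (hCM.2.2.2.1 i).1
  calc ‖f i (A (x i))‖ ≤ 1 * ‖A (x i)‖ := (f i).le_of_opNorm_le hf _
    _ ≤ ‖A‖ := by simpa using A.le_opNorm_of_le hx

theorem notMem (hCM : IsCM Y α x f) (hlam : 1 < relProjConst Y) (i : Fin l) : x i ∉ Y := by
  intro hxY
  obtain ⟨P₀, hP₀, hnorm⟩ := hCM.2.2.2.2.2
  have hfx : f i (x i) = (relProjConst Y : 𝕜) := hP₀.1.2 _ hxY ▸ hnorm i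
  have := (hCM.norm_apply_apply_le (ContinuousLinearMap.id 𝕜 E) i).trans
    ContinuousLinearMap.norm_id_le
  rw [ContinuousLinearMap.id_apply, hfx, RCLike.norm_ofReal, abs_of_pos (by linarith)] at this
  linarith

theorem apply_minProj_eq [IsScalarTower ℝ 𝕜 E] (hCM : IsCM Y α x f) {F : E →L[𝕜] 𝕜}
    (hY : Y = LinearMap.ker (F : E →ₗ[𝕜] 𝕜)) {P : E →L[𝕜] E} (hP : P ∈ MinProjSet Y)
    (i : Fin l) : f i (P (x i)) = (relProjConst Y : 𝕜) := by
  have hbound : ∀ j, ‖f j (P (x j))‖ ≤ relProjConst Y := fun j =>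
    hP.2 ▸ hCM.norm_apply_apply_le P j
  obtain ⟨hα, hα_sum, -, -, hT, P₀, hP₀, hnorm⟩ := hCM
  obtain ⟨w, hwY, hw⟩ := IsProjOnto.exists_sub_eq_smul hY hP.1 hP₀.1
  have hsplit : ∀ j, f j (P (x j)) = relProjConst Y + f j w * F (x j) := fun j => by
    rw [← hnorm j, ← sub_eq_iff_eq_add', ← map_sub, hw, map_smul, smul_eq_mul, mul_comm]
  have hFTw : ∑ j, α j • (f j w * F (x j)) = 0 := by
    have := hT w hwY
    rw [hY, LinearMap.mem_ker] at this
    simpa [map_sum, map_smul] using this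
  refine RCLike.eq_of_sum_smul_eq_of_norm_le hα hα_sum hbound ?_ i
  simp only [hsplit, smul_add, Finset.sum_add_distrib, hFTw, add_zero, ← Finset.sum_smul,
    hα_sum, one_smul]

end IsCM

end

theorem hyperplane_unique_minProj_of_cm_general
    (F : X →L[𝕜] 𝕜) (Y : Submodule 𝕜 X) (hY : Y = LinearMap.ker (F : X →ₗ[𝕜] 𝕜))
    (hlam : 1 < relProjConst Y)
    {l : ℕ} (α : Fin l → ℝ) (x : Fin l → X) (f : Fin l → (X →L[𝕜] 𝕜))
    (hCM : IsCM Y α x f)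
    (hker : ∀ y ∈ Y, (∀ i, f i y = 0) → y = 0) :
    ∃! P : X →L[𝕜] X, P ∈ MinProjSet Y := by
  obtain ⟨P₀, hP₀, -⟩ := hCM.2.2.2.2.2
  refine ⟨P₀, hP₀, fun P hP => ?_⟩
  obtain ⟨w, hwY, hw⟩ := IsProjOnto.exists_sub_eq_smul hY hP.1 hP₀.1
  have hfw : ∀ i, f i w = 0 := fun i => by
    have hFx : F (x i) ≠ 0 := fun h => hCM.notMem hlam i (hY ▸ h)
    have : F (x i) * f i w = 0 := by
      rw [← smul_eq_mul, ← map_smul, ← hw, map_sub, hCM.apply_minProj_eq hY hP,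
        hCM.apply_minProj_eq hY hP₀, sub_self]
    exact (mul_eq_zero.mp this).resolve_left hFx
  obtain rfl := hker w hwY hfw
  ext z
  simpa [sub_eq_zero] using hw z

/-- Let `Y = ker F` be a hyperplane of the `n`-dimensional space `X` (over `ℝ` or `ℂ`)
with `λ(Y, X) > 1`. If a Chalmers–Metcalf operator `∑ αᵢ xᵢ ⊗ fᵢ` for `Y` is such that
no nonzero `y ∈ Y` satisfies `fᵢ y = 0` for all `i`, then the minimal projection onto
`Y` is unique. -/
theorem hyperplane_unique_minProj_of_cm [FiniteDimensional 𝕜 X] {n : ℕ}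
    (hn : finrank 𝕜 X = n) (h2 : 2 ≤ n)
    (F : X →L[𝕜] 𝕜) (hF : F ≠ 0) (Y : Submodule 𝕜 X) (hY : Y = LinearMap.ker (F : X →ₗ[𝕜] 𝕜))
    (hlam : 1 < relProjConst Y)
    {l : ℕ} (α : Fin l → ℝ) (x : Fin l → X) (f : Fin l → (X →L[𝕜] 𝕜))
    (hCM : IsCM Y α x f)
    (hker : ∀ y ∈ Y, (∀ i, f i y = 0) → y = 0) :
    ∃! P : X →L[𝕜] X, P ∈ MinProjSet Y :=
  hyperplane_unique_minProj_of_cm_general F Y hY hlam α x f hCM hker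
end
end
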